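/- arXiv:1303.0898 — 7 statements merged into one kernel-verified Lean document; each statement's English description precedes it below -/
import Mathlib

section
/- Let F be a field of characteristic 2 and A an associative F-algebra (without unit) satisfying a² = 0 for all a ∈ A. If A is generated by d elements g₁,…,g_d, then every product of d+1 elements of A is zero. -/
/-- Over a field of characteristic 2, a `d`-generated (non-unital) associative
algebra with identity `x² = 0` satisfies: every product of `d + 1` elements is
zero (the product of `a, l₀, l₁, …` is written as a left fold). -/
theorem stmt_3 {F A : Type*} [Field F] [NonUnitalRing A] [Module F A]
    [SMulCommClass F A A] [IsScalarTower F A A]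
    (hchar : ringChar F = 2)
    (hsq : ∀ a : A, a * a = 0)
    (d : ℕ) (g : Fin d → A)
    (hgen : NonUnitalAlgebra.adjoin F (Set.range g) = ⊤) :
    ∀ (a : A) (l : List A), l.length = d → l.foldl (· * ·) a = 0 := by
  -- characteristic two facts
  have h2F : (2 : F) = 0 := by
    have h := ringChar.Nat.cast_ringChar (R := F)
    rw [hchar] at h
    exact_mod_cast h
  have h2 : ∀ x : A, x + x = 0 := fun x => by
    have : (2 : F) • x = x + x := two_smul F x
    rw [h2F, zero_smul] at this
    exact this.symm
  have hcomm : ∀ a b : A, a * b = b * a := by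
    intro a b
    have h := hsq (a + b)
    rw [add_mul, mul_add, mul_add, hsq, hsq, zero_add, add_zero] at h
    have h' : a * b + a * b = 0 := h2 _
    exact add_left_cancel (h'.trans h.symm)
  -- work in the unitization
  letI : CommRing (Unitization F A) :=
    { (inferInstance : Ring (Unitization F A)) with
      mul_comm := fun x y => by
        refine Unitization.ext ?_ ?_
        · rw [Unitization.fst_mul, Unitization.fst_mul, mul_comm]
        · rw [Unitization.snd_mul, Unitization.snd_mul, hcomm]
          abel }
  have hg2 : ∀ i : Fin d, ((g i : Unitization F A)) * (g i : Unitization F A) = 0 :=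
    fun i => by rw [← Unitization.inr_mul, hsq, Unitization.inr_zero]
  -- degree filtration by monomials
  set N : ℕ → Submodule F (Unitization F A) := fun k => Submodule.span F
    {x : Unitization F A | ∃ s : Finset (Fin d),
      k ≤ s.card ∧ x = ∏ i ∈ s, (g i : Unitization F A)} with hN
  have hmulmono : ∀ (s t : Finset (Fin d)),
      (∏ i ∈ s, (g i : Unitization F A)) * ∏ i ∈ t, (g i : Unitization F A) = 0 ∨
      ((∏ i ∈ s, (g i : Unitization F A)) * ∏ i ∈ t, (g i : Unitization F A) =
        ∏ i ∈ s ∪ t, (g i : Unitization F A) ∧ Disjoint s t) := by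
    intro s t
    by_cases hd : Disjoint s t
    · exact Or.inr ⟨(Finset.prod_union hd).symm, hd⟩
    · left
      rw [Finset.not_disjoint_iff] at hd
      obtain ⟨i, his, hit⟩ := hd
      rw [← Finset.mul_prod_erase s _ his, ← Finset.mul_prod_erase t _ hit]
      calc (g i : Unitization F A) * (∏ j ∈ s.erase i, (g j : Unitization F A)) *
            ((g i : Unitization F A) * ∏ j ∈ t.erase i, (g j : Unitization F A))
          = ((g i : Unitization F A) * (g i : Unitization F A)) *
            ((∏ j ∈ s.erase i, (g j : Unitization F A)) *
              ∏ j ∈ t.erase i, (g j : Unitization F A)) := by ring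
        _ = 0 := by rw [hg2, zero_mul]
  have hNmul : ∀ j k : ℕ, N j * N k ≤ N (j + k) := by
    intro j k
    simp only [hN]
    rw [Submodule.span_mul_span, Submodule.span_le]
    rintro x ⟨y, hy, z, hz, rfl⟩
    obtain ⟨s, hs, rfl⟩ := hy
    obtain ⟨t, ht, rfl⟩ := hz
    have hgoal : (∏ i ∈ s, (g i : Unitization F A)) * ∏ i ∈ t, (g i : Unitization F A) ∈
        Submodule.span F {x : Unitization F A | ∃ s : Finset (Fin d),
          j + k ≤ s.card ∧ x = ∏ i ∈ s, (g i : Unitization F A)} := by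
      rcases hmulmono s t with h0 | ⟨heq, hd⟩
      · rw [h0]; exact zero_mem _
      · rw [heq]
        exact Submodule.subset_span
          ⟨s ∪ t, by rw [Finset.card_union_of_disjoint hd]; omega, rfl⟩
    exact hgoal
  have hNmono : ∀ j k : ℕ, j ≤ k → N k ≤ N j := by
    intro j k hjk
    simp only [hN]
    apply Submodule.span_mono
    rintro x ⟨s, hs, rfl⟩
    exact ⟨s, le_trans hjk hs, rfl⟩
  -- every element of A lands in N 1
  have hA : ∀ x : A, (x : Unitization F A) ∈ N 1 := by
    intro x
    have hx : x ∈ NonUnitalAlgebra.adjoin F (Set.range g) := hgen ▸ trivial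
    induction hx using NonUnitalAlgebra.adjoin_induction with
    | mem y hy =>
      obtain ⟨i, rfl⟩ := hy
      exact Submodule.subset_span ⟨{i}, by simp, by simp⟩
    | add y z _ _ hy hz => rw [Unitization.inr_add]; exact add_mem hy hz
    | zero => rw [Unitization.inr_zero]; exact zero_mem _
    | mul y z _ _ hy hz =>
      rw [Unitization.inr_mul]
      exact hNmono 1 2 (by omega) (hNmul 1 1 (Submodule.mul_mem_mul hy hz))
    | smul r y _ hy => rw [Unitization.inr_smul]; exact Submodule.smul_mem _ _ hy
  -- products of lists
  have hlist : ∀ l : List A,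
      (l.map (fun x : A => (x : Unitization F A))).prod ∈ N l.length := by
    intro l
    induction l with
    | nil => exact Submodule.subset_span ⟨∅, by simp, by simp⟩
    | cons x l ih =>
      simp only [List.map_cons, List.prod_cons, List.length_cons]
      have := hNmul 1 l.length (Submodule.mul_mem_mul (hA x) ih)
      exact hNmono _ _ (by omega) this
  have hfold : ∀ (l : List A) (a : A),
      ((l.foldl (· * ·) a : A) : Unitization F A) =
        (a : Unitization F A) * (l.map (fun x : A => (x : Unitization F A))).prod := by
    intro l
    induction l with
    | nil => intro a; simp
    | cons x l ih =>
      intro a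
      simp only [List.foldl_cons, List.map_cons, List.prod_cons, ih (a * x),
        Unitization.inr_mul, mul_assoc]
  -- top degree vanishes
  have hNtop : N (d + 1) = ⊥ := by
    simp only [hN]
    convert Submodule.span_empty
    rw [Set.eq_empty_iff_forall_notMem]
    rintro x ⟨s, hs, rfl⟩
    have := s.card_le_univ
    simp [Finset.card_fin] at this
    omega
  intro a l hl
  have hmem : ((l.foldl (· * ·) a : A) : Unitization F A) ∈ N (d + 1) := by
    rw [hfold]
    have := hNmul 1 l.length (Submodule.mul_mem_mul (hA a) (hlist l))
    rw [hl] at this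
    exact hNmono _ _ (by omega) this
  rw [hNtop, Submodule.mem_bot] at hmem
  exact Unitization.inr_injective (hmem.trans (Unitization.inr_zero F).symm)
end

section
/- Let F be a field and A an associative F-algebra (without unit) in which L_{111}(a,b,c) = 0 for all a,b,c ∈ A, where L_{111}(a,b,c) = abc + acb + bac + bca + cab + cba. Then for all x, y, z ∈ A: x·L_{21}(y,z) = L_{21}(y,xz), where L_{21}(y,z) = y²z + yzy + zy². -/
/-- If in a (non-unital) associative `F`-algebra the full linearization
`L₁₁₁(a,b,c) = abc + acb + bac + bca + cab + cba` of `x³` vanishes identically,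
then `x·L₂₁(y,z) = L₂₁(y,xz)`, where `L₂₁(y,z) = y²z + yzy + zy²`. -/
theorem stmt_8 {F A : Type*} [Field F] [NonUnitalRing A] [Module F A]
    [SMulCommClass F A A] [IsScalarTower F A A]
    (hL : ∀ a b c : A,
      a * b * c + a * c * b + b * a * c + b * c * a + c * a * b + c * b * a = 0) :
    ∀ x y z : A,
      x * (y * y * z + y * z * y + z * y * y)
        = y * y * (x * z) + y * (x * z) * y + (x * z) * y * y := by
  intro x y z
  have h1 := hL x y (y * z)
  have h2 := hL x y z
  have h3 : y * (x * y * z + x * z * y + y * x * z + y * z * x + z * x * y + z * y * x) = y * 0 := by rw [h2]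
  linear_combination (norm := noncomm_ring) h1 - h3
end

section
/- Let F be a field and A an associative F-algebra (without unit) in which L_{111}(a,b,c) = 0 for all a,b,c ∈ A. Then for all x, y, z ∈ A: L_{21}(x,y)·z = L_{21}(x,yz), where L_{21}(x,y) = x²y + xyx + yx² and L_{111}(a,b,c) = abc + acb + bac + bca + cab + cba. -/
/-- If in a (non-unital) associative `F`-algebra the full linearization
`L₁₁₁(a,b,c) = abc + acb + bac + bca + cab + cba` of `x³` vanishes identically,
then `L₂₁(x,y)·z = L₂₁(x,yz)`, where `L₂₁(x,y) = x²y + xyx + yx²`. -/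
theorem stmt_9 {F A : Type*} [Field F] [NonUnitalRing A] [Module F A]
    [SMulCommClass F A A] [IsScalarTower F A A]
    (hL : ∀ a b c : A,
      a * b * c + a * c * b + b * a * c + b * c * a + c * a * b + c * b * a = 0) :
    ∀ x y z : A,
      (x * x * y + x * y * x + y * x * x) * z
        = x * x * (y * z) + x * (y * z) * x + (y * z) * x * x := by
  intro x y z
  have h0 := hL x y z
  have h1 := hL x y (x * z)
  have h2 := hL x y (z * x)
  have h3 := hL x z (x * y)
  have key : (x * x * y + x * y * x + y * x * x) * z
      - (x * x * (y * z) + x * (y * z) * x + (y * z) * x * x)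
      = -(x * (x * y * z + x * z * y + y * x * z + y * z * x + z * x * y + z * y * x))
        + (x * y * (x * z) + x * (x * z) * y + y * x * (x * z) + y * (x * z) * x
            + (x * z) * x * y + (x * z) * y * x)
        - (x * y * (z * x) + x * (z * x) * y + y * x * (z * x) + y * (z * x) * x
            + (z * x) * x * y + (z * x) * y * x)
        + (x * z * (x * y) + x * (x * y) * z + z * x * (x * y) + z * (x * y) * x
            + (x * y) * x * z + (x * y) * z * x) := by
    noncomm_ring
  rw [h0, h1, h2, h3] at key
  simp only [mul_zero, neg_zero, add_zero, sub_zero, zero_add] at key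
  exact sub_eq_zero.mp key
end

section
/- Let F be a field of characteristic 2 and A an associative F-algebra in which L_{111} vanishes identically and L_{21}(a,b) = L_{12}(a,b) for all a,b (equivalently L_{21}+L_{12} = 0 in characteristic 2). Then for all x, y, z ∈ A: xyxyz = y²x²z + L_{21}(x, y²z) + L_{21}(y, x²z), where L_{21}(x,y) = x²y + xyx + yx², L_{12}(x,y) = xy² + yxy + y²x, and L_{111}(x,y,z) = xyz + xzy + yxz + yzx + zxy + zyx. -/
/-- Over a field of characteristic 2, in a (non-unital) associative algebra where
`L₁₁₁` vanishes identically and `L₂₁(a,b) = L₁₂(a,b)` for all `a, b`, one has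
`xyxyz = y²x²z + L₂₁(x, y²z) + L₂₁(y, x²z)`, where `L₂₁(x,y) = x²y + xyx + yx²`
and `L₁₂(x,y) = xy² + yxy + y²x`. -/
theorem stmt_10 {F A : Type*} [Field F] [NonUnitalRing A] [Module F A]
    [SMulCommClass F A A] [IsScalarTower F A A]
    (hchar : ringChar F = 2)
    (hL111 : ∀ a b c : A,
      a * b * c + a * c * b + b * a * c + b * c * a + c * a * b + c * b * a = 0)
    (hL21 : ∀ a b : A,
      a * a * b + a * b * a + b * a * a = a * b * b + b * a * b + b * b * a) :
    ∀ x y z : A,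
      x * y * x * y * z
        = y * y * x * x * z
          + (x * x * (y * y * z) + x * (y * y * z) * x + (y * y * z) * x * x)
          + (y * y * (x * x * z) + y * (x * x * z) * y + (x * x * z) * y * y) := by
  intro x y z
  have hcp : CharP F 2 := by have := ringChar.charP F; rwa [hchar] at this
  have h2 : ∀ a : A, a + a = 0 := by
    intro a
    have hF : (1 : F) + 1 = 0 := by
      have : ((2 : ℕ) : F) = 0 := CharP.cast_eq_zero F 2
      push_cast at this
      linear_combination this
    rw [← one_smul F a, ← add_smul, hF, zero_smul]
  set v : A := x*y*x*y*z + x*x*y*y*z + x*x*y*z*y + y*x*x*y*z + y*x*x*y*z + y*x*y*z*x + x*y*z*x*y + x*y*z*y*x + y*z*x*x*y + y*z*x*y*x + y*z*y*x*x + z*y*x*x*y + z*x*x*y*y + z*y*y*x*x with hv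
  have key : x * y * x * y * z + (y * y * x * x * z + (x * x * (y * y * z) + x * (y * y * z) * x + (y * y * z) * x * x) + (y * y * (x * x * z) + y * (x * x * z) * y + (x * x * z) * y * y)) + (v + v)
      = (x*y*(x*y*z) + x*(x*y*z)*y + y*x*(x*y*z) + y*(x*y*z)*x + (x*y*z)*x*y + (x*y*z)*y*x) + (x*(x*y)*(y*z) + x*(y*z)*(x*y) + (x*y)*x*(y*z) + (x*y)*(y*z)*x + (y*z)*x*(x*y) + (y*z)*(x*y)*x) + (x*(y*x)*(y*z) + x*(y*z)*(y*x) + (y*x)*x*(y*z) + (y*x)*(y*z)*x + (y*z)*x*(y*x) + (y*z)*(y*x)*x) + (y*z*(x*x*y) + y*(x*x*y)*z + z*y*(x*x*y) + z*(x*x*y)*y + (x*x*y)*y*z + (x*x*y)*z*y) + (y*z*(y*x*x) + y*(y*x*x)*z + z*y*(y*x*x) + z*(y*x*x)*y + (y*x*x)*y*z + (y*x*x)*z*y) + (z*(x*x)*(y*y) + z*(y*y)*(x*x) + (x*x)*z*(y*y) + (x*x)*(y*y)*z + (y*y)*z*(x*x) + (y*y)*(x*x)*z) := by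
    rw [hv]; noncomm_ring
  rw [h2 v, add_zero, hL111 x y (x*y*z), hL111 x (x*y) (y*z), hL111 x (y*x) (y*z), hL111 y z (x*x*y), hL111 y z (y*x*x), hL111 z (x*x) (y*y)] at key
  simp only [add_zero, zero_add] at key
  have hneg : -(y * y * x * x * z + (x * x * (y * y * z) + x * (y * y * z) * x + (y * y * z) * x * x) + (y * y * (x * x * z) + y * (x * x * z) * y + (x * x * z) * y * y)) = x * y * x * y * z := neg_eq_of_add_eq_zero_left key
  rw [← hneg]
  exact neg_eq_of_add_eq_zero_left (h2 _)
end

section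
/- Let n ≥ 2 and let F be a field in which (n-1)! is invertible (e.g. char F = 0 or char F ≥ n). Then for all x, y in any associative F-algebra: n·x·yⁿ = L_{n-1,1}(y, xy) - (n-1)·L_{n-1,1}(y, yx) + L_{n-2,1,1}(y, x, y²), where L_{n-1,1}(y,a) = ∑_{i=0}^{n-1} yⁱ a y^{n-1-i} and L_{n-2,1,1}(y,a,b) is the sum over all ways of inserting a and b (in either relative order) into a product of n-2 copies of y, i.e., the multidegree-(n-2,1,1) component of (y+a+b)ⁿ where a,b each appear exactly once. -/
-- helper: combine powers
lemma pow3 {A : Type*} [Monoid A] (y : A) (a b c : ℕ) (h : a + 2 + b = c) :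
    y ^ a * y ^ 2 * y ^ b = y ^ c := by
  rw [← pow_add, ← pow_add, h]

lemma prod_two {A : Type*} [Monoid A] (n i j : ℕ) (hi : i < n) (hj : j < n)
    (hij : i ≠ j) (x y : A) :
    (((List.replicate n y).set j (y ^ 2)).set i x).prod =
      if j < i then y ^ (i + 1) * x * y ^ (n - 1 - i)
      else y ^ i * x * y ^ (n - i) := by
  rw [List.prod_set, List.take_set, List.drop_set, List.take_replicate, List.drop_replicate]
  have hmin : min i n = i := by omega
  rw [hmin]
  by_cases h : j < i
  · rw [if_pos h, if_pos (by omega : j < i + 1)]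
    rw [List.prod_set, List.take_replicate, List.drop_replicate, List.prod_replicate,
      List.prod_replicate, List.prod_replicate]
    rw [if_pos (by simpa using h), if_pos (by simp; omega)]
    rw [show min j i = j by omega]
    rw [pow3 y j (i - (j + 1)) (i + 1) (by omega), show n - (i+1) = n - 1 - i by omega]
  · rw [if_neg h, if_neg (by omega : ¬ j < i + 1)]
    rw [List.set_eq_of_length_le (by simp; omega)]
    rw [List.prod_set, List.take_replicate, List.drop_replicate, List.prod_replicate,
      List.prod_replicate, List.prod_replicate]
    rw [if_pos (by simp; omega), if_pos (by simp; omega)]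
    rw [show min (j - (i+1)) (n - (i+1)) = j - (i+1) by omega]
    rw [pow3 y (j - (i+1)) (n - (i+1) - (j - (i+1) + 1)) (n - i) (by omega)]

lemma ofFn_eq {A : Type*} (n : ℕ) (i j : Fin n) (x b y : A) :
    (List.ofFn fun k : Fin n => if k = i then x else if k = j then b else y)
      = ((List.replicate n y).set j b).set i x := by
  apply List.ext_getElem
  · simp
  · intro m h1 h2
    simp only [List.getElem_ofFn, List.getElem_set, List.getElem_replicate]
    have hm : m < n := by simpa using h1
    by_cases h : (i : ℕ) = m
    · rw [if_pos h, if_pos (by ext; simpa using h.symm)]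
    · rw [if_neg h, if_neg (by simp [Fin.ext_iff]; omega)]
      by_cases h' : (j : ℕ) = m
      · rw [if_pos h', if_pos (by ext; simpa using h'.symm)]
      · rw [if_neg h', if_neg (by simp [Fin.ext_iff]; omega)]

lemma stmt12_inner_sum {A : Type*} [Ring A] (n : ℕ) (x y : A) (i : Fin n) :
    (∑ j : Fin n, if i ≠ j then
        (List.ofFn fun k : Fin n =>
          if k = i then x else if k = j then y ^ 2 else y).prod
      else 0)
    = (i : ℕ) • (y ^ ((i : ℕ) + 1) * x * y ^ (n - 1 - (i : ℕ)))
      + (n - 1 - (i : ℕ)) • (y ^ (i : ℕ) * x * y ^ (n - (i : ℕ))) := by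
  set C := y ^ ((i : ℕ) + 1) * x * y ^ (n - 1 - (i : ℕ)) with hC
  set B := y ^ (i : ℕ) * x * y ^ (n - (i : ℕ)) with hB
  have hstep : ∀ j : Fin n,
      (if i ≠ j then
        (List.ofFn fun k : Fin n =>
          if k = i then x else if k = j then y ^ 2 else y).prod
      else 0)
      = (if (i : ℕ) = (j : ℕ) then 0 else if (j : ℕ) < (i : ℕ) then C else B) := by
    intro j
    by_cases h : i = j
    · simp [h]
    · rw [if_pos h, if_neg (by simpa [Fin.ext_iff] using h)]
      rw [ofFn_eq n i j x (y ^ 2) y,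
        prod_two n (i : ℕ) (j : ℕ) i.isLt j.isLt (by simpa [Fin.ext_iff] using h) x y]
  rw [Finset.sum_congr rfl (fun j _ => hstep j)]
  rw [Fin.sum_univ_eq_sum_range
    (fun m => if (i : ℕ) = m then 0 else if m < (i : ℕ) then C else B) n]
  have hi : (i : ℕ) < n := i.isLt
  rw [← Finset.sum_range_add_sum_Ico _ (by omega : (i : ℕ) + 1 ≤ n)]
  rw [Finset.sum_range_succ]
  rw [if_pos rfl]
  have h1 : ∑ m ∈ Finset.range (i : ℕ),
      (if (i : ℕ) = m then 0 else if m < (i : ℕ) then C else B) = (i : ℕ) • C := by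
    rw [Finset.sum_congr rfl (fun m hm => ?_), Finset.sum_const, Finset.card_range]
    rw [Finset.mem_range] at hm
    rw [if_neg (by omega), if_pos hm]
  have h2 : ∑ m ∈ Finset.Ico ((i : ℕ) + 1) n,
      (if (i : ℕ) = m then 0 else if m < (i : ℕ) then C else B) = (n - 1 - (i : ℕ)) • B := by
    rw [Finset.sum_congr rfl (fun m hm => ?_), Finset.sum_const, Nat.card_Ico,
      show n - ((i : ℕ) + 1) = n - 1 - (i : ℕ) by omega]
    rw [Finset.mem_Ico] at hm
    rw [if_neg (by omega), if_neg (by omega)]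
  rw [h1, h2, add_zero]

/-- Lemma 4.1 of the paper: if `(n-1)!` is invertible in the field `F`, then in
any associative `F`-algebra,
`n·x·yⁿ = L_{n-1,1}(y, xy) - (n-1)·L_{n-1,1}(y, yx) + L_{n-2,1,1}(y, x, y²)`,
where `L_{n-1,1}(y,a) = ∑_{i<n} yⁱ a y^{n-1-i}` and `L_{n-2,1,1}(y,a,b)` is the
sum over all placements of `a` and `b` (at distinct positions) in a product of
`n` factors whose remaining entries are `y`. -/
theorem stmt_12 {F A : Type*} [Field F] [Ring A] [Algebra F A]
    (n : ℕ) (hn : 2 ≤ n) (hinv : ((Nat.factorial (n - 1) : F)) ≠ 0) (x y : A) :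
    n • (x * y ^ n)
      = (∑ i ∈ Finset.range n, y ^ i * (x * y) * y ^ (n - 1 - i))
        - (n - 1) • (∑ i ∈ Finset.range n, y ^ i * (y * x) * y ^ (n - 1 - i))
        + ∑ i : Fin n, ∑ j : Fin n,
            if i ≠ j then
              (List.ofFn fun k : Fin n =>
                if k = i then x else if k = j then y ^ 2 else y).prod
            else 0 := by
  clear hinv
  have h1 : ∑ i ∈ Finset.range n, y ^ i * (x * y) * y ^ (n - 1 - i)
      = ∑ i ∈ Finset.range n, y ^ i * x * y ^ (n - i) := by
    refine Finset.sum_congr rfl fun i hi => ?_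
    rw [Finset.mem_range] at hi
    rw [mul_assoc, mul_assoc x y, ← pow_succ' y (n - 1 - i),
      show n - 1 - i + 1 = n - i by omega, ← mul_assoc]
  have h2 : ∑ i ∈ Finset.range n, y ^ i * (y * x) * y ^ (n - 1 - i)
      = ∑ i ∈ Finset.range n, y ^ (i + 1) * x * y ^ (n - 1 - i) := by
    refine Finset.sum_congr rfl fun i hi => ?_
    rw [← mul_assoc (y ^ i) y x, ← pow_succ]
  have h3 : (∑ i : Fin n, ∑ j : Fin n,
        if i ≠ j then
          (List.ofFn fun k : Fin n =>
            if k = i then x else if k = j then y ^ 2 else y).prod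
        else 0)
      = ∑ i ∈ Finset.range n,
          (i • (y ^ (i + 1) * x * y ^ (n - 1 - i))
            + (n - 1 - i) • (y ^ i * x * y ^ (n - i))) := by
    rw [Finset.sum_congr rfl (fun i _ => stmt12_inner_sum n x y i)]
    exact Fin.sum_univ_eq_sum_range
      (fun m => m • (y ^ (m + 1) * x * y ^ (n - 1 - m))
        + (n - 1 - m) • (y ^ m * x * y ^ (n - m))) n
  rw [h1, h2, h3, sub_add_eq_add_sub, eq_sub_iff_add_eq, Finset.smul_sum,
    ← Finset.sum_add_distrib]
  have h4 : ∀ i ∈ Finset.range n,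
      (n - 1) • (y ^ (i + 1) * x * y ^ (n - 1 - i))
        = i • (y ^ (i + 1) * x * y ^ (n - 1 - i))
          + (n - 1 - i) • (y ^ (i + 1) * x * y ^ (n - 1 - i)) := by
    intro i hi
    rw [Finset.mem_range] at hi
    rw [← add_nsmul, show i + (n - 1 - i) = n - 1 by omega]
  have h5 : ∀ i ∈ Finset.range n,
      (y ^ i * x * y ^ (n - i)
          + (i • (y ^ (i + 1) * x * y ^ (n - 1 - i))
            + (n - 1 - i) • (y ^ i * x * y ^ (n - i))))
        = i • (y ^ (i + 1) * x * y ^ (n - 1 - i))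
          + (n - i) • (y ^ i * x * y ^ (n - i)) := by
    intro i hi
    rw [Finset.mem_range] at hi
    rw [← add_assoc, add_comm (y ^ i * x * y ^ (n - i)), add_assoc,
      show n - i = n - 1 - i + 1 by omega, succ_nsmul']
  rw [Finset.sum_congr rfl h4, Finset.sum_congr rfl h5,
    Finset.sum_add_distrib, Finset.sum_add_distrib]
  have key : ∑ i ∈ Finset.range n, (n - i) • (y ^ i * x * y ^ (n - i))
      = n • (x * y ^ n)
        + ∑ i ∈ Finset.range n, (n - 1 - i) • (y ^ (i + 1) * x * y ^ (n - 1 - i)) := by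
    have e1 : ∀ i ∈ Finset.range n,
        (n - 1 - i) • (y ^ (i + 1) * x * y ^ (n - 1 - i))
          = (fun m => (n - m) • (y ^ m * x * y ^ (n - m))) (i + 1) := by
      intro i hi
      rw [Finset.mem_range] at hi
      simp only [show n - 1 - i = n - (i + 1) by omega]
    rw [Finset.sum_congr rfl e1]
    have e2 : ∑ i ∈ Finset.range n, (n - i) • (y ^ i * x * y ^ (n - i))
        = ∑ i ∈ Finset.range (n + 1), (n - i) • (y ^ i * x * y ^ (n - i)) := by
      rw [Finset.sum_range_succ, Nat.sub_self, zero_smul, add_zero]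
    rw [e2, Finset.sum_range_succ'
      (fun m => (n - m) • (y ^ m * x * y ^ (n - m))) n]
    simp only [Nat.sub_zero, pow_zero, one_mul]
    rw [add_comm]
  rw [key]
  abel
end

section
/- Let n ≥ 3 and let F be a field, and let A be an associative F-algebra in which all partial linearizations L_θ of xⁿ vanish for every multidegree θ with |θ| = n and θ ∉ {(n), (1,n-1), (n-1,1)}, and in which L_{1,n-1}(x,y) + L_{n-1,1}(x,y) = 0 for all x,y ∈ A. Then for all x, y, z ∈ A: x · L_{n-1,1}(y, z) = L_{n-1,1}(y, xz), where L_{n-1,1}(y,z) = ∑_{i=0}^{n-1} yⁱ z y^{n-1-i}. -/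
/-- The product of a nonempty list in a non-unital ring (`0` for the empty list). -/
def prodNE {A : Type*} [Mul A] [Zero A] : List A → A
  | [] => 0
  | a :: l => l.foldl (· * ·) a

/-- `Lpart n θ a` is the partial linearization `L_θ(a₁,…,a_r)` of `xⁿ` of
multidegree `θ`: the sum of all products of `n` factors from `a₁,…,a_r` in
which `aᵢ` occurs exactly `θ i` times. -/
def Lpart {A : Type*} [NonUnitalRing A] (n : ℕ) {r : ℕ} (θ : Fin r → ℕ)
    (a : Fin r → A) : A :=
  ∑ v ∈ Finset.univ.filter (fun v : Fin n → Fin r =>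
      ∀ i, (Finset.univ.filter fun k => v k = i).card = θ i),
    prodNE ((List.ofFn v).map a)

def wrd3 {A : Type*} (a b c : A) (m p q : ℕ) : List A :=
  if p < q then
    List.replicate p c ++ a :: (List.replicate (q-p-1) c ++ b :: List.replicate (m-1-q) c)
  else
    List.replicate q c ++ b :: (List.replicate (p-q-1) c ++ a :: List.replicate (m-1-p) c)

set_option linter.unusedSectionVars false
set_option maxHeartbeats 1000000

section aux
variable {A : Type*} [NonUnitalRing A]

lemma foldl_mul (l : List A) : ∀ x b : A,
    x * l.foldl (· * ·) b = l.foldl (· * ·) (x * b) := by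
  induction l with
  | nil => intro x b; rfl
  | cons h t ih =>
    intro x b
    simp only [List.foldl_cons]
    rw [ih, mul_assoc]

lemma mul_prodNE (x : A) (l : List A) (hl : l ≠ []) :
    x * prodNE l = prodNE (x :: l) := by
  cases l with
  | nil => exact absurd rfl hl
  | cons b t =>
    show x * t.foldl (· * ·) b = (b :: t).foldl (· * ·) x
    rw [List.foldl_cons, foldl_mul]

lemma prodNE_merge (b c : A) (l₁ l₂ : List A) :
    prodNE (l₁ ++ (b * c) :: l₂) = prodNE (l₁ ++ b :: c :: l₂) := by
  cases l₁ with
  | nil => simp [prodNE]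
  | cons h t => simp [prodNE, List.foldl_append, mul_assoc]

lemma rep_cons (j : ℕ) (y : A) (l : List A) :
    List.replicate j y ++ y :: l = List.replicate (j+1) y ++ l := by
  rw [List.replicate_succ', List.append_assoc]; rfl

lemma ofFn_ite1 : ∀ (n q : ℕ), q < n → ∀ (z y : A),
    List.ofFn (fun k : Fin n => if (k : ℕ) = q then z else y)
      = List.replicate q y ++ z :: List.replicate (n - 1 - q) y := by
  intro n
  induction n with
  | zero => omega
  | succ m ih =>
    intro q hq z y
    rw [List.ofFn_succ]
    cases q with
    | zero =>
      simp [List.ofFn_const]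
    | succ q' =>
      have h1 : (fun i : Fin m => if ((i.succ : Fin (m+1)) : ℕ) = q' + 1 then z else y)
          = fun i : Fin m => if (i : ℕ) = q' then z else y := by
        funext i; simp [Fin.val_succ]
      rw [h1, ih q' (by omega)]
      have h2 : m + 1 - 1 - (q' + 1) = m - 1 - q' := by omega
      simp [List.replicate_succ, h2]; omega

lemma ofFn_ite2 : ∀ (n p q : ℕ), p < q → q < n → ∀ (x b y : A),
    List.ofFn (fun k : Fin n => if (k : ℕ) = p then x else if (k : ℕ) = q then b else y)
      = List.replicate p y ++ x ::
          (List.replicate (q - p - 1) y ++ b :: List.replicate (n - 1 - q) y) := by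
  intro n
  induction n with
  | zero => omega
  | succ m ih =>
    intro p q hpq hq x b y
    obtain ⟨q', rfl⟩ : ∃ q', q = q' + 1 := ⟨q - 1, by omega⟩
    rw [List.ofFn_succ]
    cases p with
    | zero =>
      have h1 : (fun i : Fin m => if ((i.succ : Fin (m+1)) : ℕ) = 0 then x
          else if ((i.succ : Fin (m+1)) : ℕ) = q' + 1 then b else y)
          = fun i : Fin m => if (i : ℕ) = q' then b else y := by
        funext i; simp [Fin.val_succ]
      rw [h1, ofFn_ite1 m q' (by omega)]
      have h2 : m + 1 - 1 - (q' + 1) = m - 1 - q' := by omega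
      simp [h2]; omega
    | succ p' =>
      have h1 : (fun i : Fin m => if ((i.succ : Fin (m+1)) : ℕ) = p' + 1 then x
          else if ((i.succ : Fin (m+1)) : ℕ) = q' + 1 then b else y)
          = fun i : Fin m => if (i : ℕ) = p' then x else if (i : ℕ) = q' then b else y := by
        funext i; simp [Fin.val_succ]
      rw [h1, ih p' q' (by omega) (by omega)]
      have h2 : m + 1 - 1 - (q' + 1) = m - 1 - q' := by omega
      have h3 : q' + 1 - (p' + 1) - 1 = q' - p' - 1 := by omega
      simp [List.replicate_succ, h2, h3]; omega

lemma wrd3_ne_nil (a b c : A) (m p q : ℕ) : wrd3 a b c m p q ≠ [] := by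
  rw [wrd3]; split_ifs <;> simp

lemma Lpart_three {n : ℕ} (hn : 2 ≤ n) (a b c : A) :
    Lpart n ![1,1,n-2] ![a,b,c]
      = ∑ pq ∈ (Finset.range n ×ˢ Finset.range n).filter (fun pq : ℕ×ℕ => pq.1 ≠ pq.2),
          prodNE (wrd3 a b c n pq.1 pq.2) := by
  have himg : (Finset.univ.filter (fun v : Fin n → Fin 3 =>
      ∀ i, (Finset.univ.filter fun k => v k = i).card = ![1,1,n-2] i))
      = ((Finset.range n ×ˢ Finset.range n).filter (fun pq : ℕ×ℕ => pq.1 ≠ pq.2)).image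
          (fun pq => fun k : Fin n =>
            if (k : ℕ) = pq.1 then (0 : Fin 3) else if (k : ℕ) = pq.2 then 1 else 2) := by
    ext v
    simp only [Finset.mem_filter, Finset.mem_univ, true_and, Finset.mem_image,
      Finset.mem_range, Finset.mem_product]
    constructor
    · intro h
      have h0 := h 0
      have h1 := h 1
      rw [show (![1,1,n-2] 0 : ℕ) = 1 from rfl] at h0
      rw [show (![1,1,n-2] 1 : ℕ) = 1 from rfl] at h1
      obtain ⟨p₀, hp₀⟩ := Finset.card_eq_one.mp h0
      obtain ⟨q₀, hq₀⟩ := Finset.card_eq_one.mp h1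
      have hp₀mem : v p₀ = 0 := by
        have : p₀ ∈ Finset.univ.filter fun k => v k = 0 := by
          rw [hp₀]; exact Finset.mem_singleton_self p₀
        simpa using this
      have hq₀mem : v q₀ = 1 := by
        have : q₀ ∈ Finset.univ.filter fun k => v k = 1 := by
          rw [hq₀]; exact Finset.mem_singleton_self q₀
        simpa using this
      have hpq : p₀ ≠ q₀ := by
        intro h'; rw [h', hq₀mem] at hp₀mem; exact absurd hp₀mem (by decide)
      refine ⟨(p₀.1, q₀.1), ⟨⟨p₀.2, q₀.2⟩, fun h' => hpq (Fin.ext h')⟩, ?_⟩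
      funext k
      by_cases hk0 : (k : ℕ) = (p₀ : ℕ)
      · rw [if_pos hk0, show k = p₀ from Fin.ext hk0]; exact hp₀mem.symm
      · rw [if_neg hk0]
        by_cases hk1 : (k : ℕ) = (q₀ : ℕ)
        · rw [if_pos hk1, show k = q₀ from Fin.ext hk1]; exact hq₀mem.symm
        · rw [if_neg hk1]
          have hv0 : v k ≠ 0 := by
            intro hv
            have hmem : k ∈ Finset.univ.filter fun k => v k = 0 := by simpa using hv
            rw [hp₀, Finset.mem_singleton] at hmem
            exact hk0 (congrArg Fin.val hmem)
          have hv1 : v k ≠ 1 := by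
            intro hv
            have hmem : k ∈ Finset.univ.filter fun k => v k = 1 := by simpa using hv
            rw [hq₀, Finset.mem_singleton] at hmem
            exact hk1 (congrArg Fin.val hmem)
          have hlt := (v k).isLt
          have e0 : ((v k : ℕ)) ≠ 0 := fun h' => hv0 (Fin.ext (by simpa using h'))
          have e1 : ((v k : ℕ)) ≠ 1 := fun h' => hv1 (Fin.ext (by simpa using h'))
          exact (Fin.ext (by simp only [Fin.val_two]; omega) : v k = 2).symm
    · rintro ⟨⟨p, q⟩, ⟨⟨hp, hq⟩, hpq⟩, rfl⟩
      simp only at hpq ⊢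
      have hset0 : (Finset.univ.filter fun k : Fin n =>
          (if (k:ℕ) = p then (0:Fin 3) else if (k:ℕ) = q then 1 else 2) = 0)
          = {(⟨p, hp⟩ : Fin n)} := by
        ext k
        simp only [Finset.mem_filter, Finset.mem_univ, true_and, Finset.mem_singleton]
        constructor
        · intro hk
          by_cases h0 : (k:ℕ) = p
          · exact Fin.ext h0
          · rw [if_neg h0] at hk
            by_cases h1 : (k:ℕ) = q
            · rw [if_pos h1] at hk; exact absurd hk (by decide)
            · rw [if_neg h1] at hk; exact absurd hk (by decide)
        · rintro rfl; simp
      have hset1 : (Finset.univ.filter fun k : Fin n =>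
          (if (k:ℕ) = p then (0:Fin 3) else if (k:ℕ) = q then 1 else 2) = 1)
          = {(⟨q, hq⟩ : Fin n)} := by
        ext k
        simp only [Finset.mem_filter, Finset.mem_univ, true_and, Finset.mem_singleton]
        constructor
        · intro hk
          by_cases h0 : (k:ℕ) = p
          · rw [if_pos h0] at hk; exact absurd hk (by decide)
          · rw [if_neg h0] at hk
            by_cases h1 : (k:ℕ) = q
            · exact Fin.ext h1
            · rw [if_neg h1] at hk; exact absurd hk (by decide)
        · rintro rfl
          simp only [show ((⟨q, hq⟩ : Fin n) : ℕ) = q from rfl]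
          rw [if_neg (fun h' => hpq h'.symm)]; simp
      have hset2 : (Finset.univ.filter fun k : Fin n =>
          (if (k:ℕ) = p then (0:Fin 3) else if (k:ℕ) = q then 1 else 2) = 2)
          = ((Finset.univ : Finset (Fin n)).erase ⟨p, hp⟩).erase ⟨q, hq⟩ := by
        ext k
        simp only [Finset.mem_filter, Finset.mem_univ, true_and, Finset.mem_erase,
          and_true]
        constructor
        · intro hk
          by_cases h0 : (k:ℕ) = p
          · rw [if_pos h0] at hk; exact absurd hk (by decide)
          · by_cases h1 : (k:ℕ) = q
            · rw [if_neg h0, if_pos h1] at hk; exact absurd hk (by decide)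
            · exact ⟨fun h' => h1 (congrArg Fin.val h'), fun h' => h0 (congrArg Fin.val h')⟩
        · rintro ⟨hk1, hk0⟩
          rw [if_neg (fun h' => hk0 (Fin.ext h')), if_neg (fun h' => hk1 (Fin.ext h'))]
      intro i
      fin_cases i
      · simp only [show ((⟨0, by omega⟩ : Fin 3)) = 0 from rfl]
        rw [hset0, show (![1,1,n-2] 0 : ℕ) = 1 from rfl]
        simp
      · simp only [show ((⟨1, by omega⟩ : Fin 3)) = 1 from rfl]
        rw [hset1, show (![1,1,n-2] 1 : ℕ) = 1 from rfl]
        simp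
      · simp only [show ((⟨2, by omega⟩ : Fin 3)) = 2 from rfl]
        rw [hset2, show (![1,1,n-2] 2 : ℕ) = n - 2 from rfl,
          Finset.card_erase_of_mem, Finset.card_erase_of_mem (Finset.mem_univ _)]
        · simp only [Finset.card_univ, Fintype.card_fin]
          omega
        · exact Finset.mem_erase.mpr ⟨fun h' => hpq ((congrArg Fin.val h').symm), Finset.mem_univ _⟩
  rw [Lpart, himg, Finset.sum_image ?hinj]
  case hinj =>
    rintro ⟨p, q⟩ hab ⟨p', q'⟩ hcd hfe
    simp only [Finset.mem_coe, Finset.mem_filter, Finset.mem_product, Finset.mem_range] at hab hcd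
    have hp := congrFun hfe ⟨p, hab.1.1⟩
    have hq := congrFun hfe ⟨q, hab.1.2⟩
    simp only [Fin.val_mk] at hp hq
    rw [if_neg (Ne.symm hab.2)] at hq
    simp only [if_true] at hp hq
    have hp' : p = p' := by
      by_cases h1 : p = p'
      · exact h1
      · rw [if_neg h1] at hp
        by_cases h2 : p = q'
        · rw [if_pos h2] at hp; exact absurd hp (by decide)
        · rw [if_neg h2] at hp; exact absurd hp (by decide)
    have hq' : q = q' := by
      by_cases h1 : q = p'
      · rw [if_pos h1] at hq; exact absurd hq (by decide)
      · rw [if_neg h1] at hq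
        by_cases h2 : q = q'
        · exact h2
        · rw [if_neg h2] at hq; exact absurd hq (by decide)
    simp [hp', hq']
  apply Finset.sum_congr rfl
  rintro ⟨p, q⟩ hpq
  simp only [Finset.mem_filter, Finset.mem_product, Finset.mem_range] at hpq
  obtain ⟨⟨hp, hq⟩, hne⟩ := hpq
  rw [List.map_ofFn]
  have hc : (![a,b,c] ∘ fun k : Fin n =>
        if (k:ℕ) = p then (0:Fin 3) else if (k:ℕ) = q then 1 else 2)
      = fun k : Fin n => if (k:ℕ) = p then a else if (k:ℕ) = q then b else c := by
    funext k
    by_cases h0 : (k:ℕ) = p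
    · simp [h0, Function.comp]
    · by_cases h1 : (k:ℕ) = q <;> simp [h0, h1, Ne.symm hne, Function.comp]
  rw [hc]
  by_cases hlt : p < q
  · rw [ofFn_ite2 n p q hlt hq, wrd3, if_pos hlt]
  · have hqp : q < p := by omega
    have hsw : (fun k : Fin n => if (k:ℕ) = p then a else if (k:ℕ) = q then b else c)
        = fun k : Fin n => if (k:ℕ) = q then b else if (k:ℕ) = p then a else c := by
      funext k
      by_cases h0 : (k:ℕ) = p
      · rw [if_pos h0, if_neg (by omega), if_pos h0]
      · by_cases h1 : (k:ℕ) = q <;> simp [h0, h1, Ne.symm hne]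
    rw [hsw, ofFn_ite2 n q p hqp hp, wrd3, if_neg hlt]

lemma Lpart_two {n : ℕ} (hn : 1 ≤ n) (y z : A) :
    Lpart n ![n-1, 1] ![y, z]
      = ∑ q ∈ Finset.range n,
          prodNE (List.replicate q y ++ z :: List.replicate (n-1-q) y) := by
  have himg : (Finset.univ.filter (fun v : Fin n → Fin 2 =>
      ∀ i, (Finset.univ.filter fun k => v k = i).card = ![n-1,1] i))
      = (Finset.range n).image
          (fun q => fun k : Fin n => if (k : ℕ) = q then (1 : Fin 2) else 0) := by
    ext v
    simp only [Finset.mem_filter, Finset.mem_univ, true_and, Finset.mem_image,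
      Finset.mem_range]
    constructor
    · intro h
      have h1 := h 1
      rw [show (![n-1,1] 1 : ℕ) = 1 from rfl] at h1
      obtain ⟨q₀, hq₀⟩ := Finset.card_eq_one.mp h1
      have hq₀mem : v q₀ = 1 := by
        have : q₀ ∈ Finset.univ.filter fun k => v k = 1 := by
          rw [hq₀]; exact Finset.mem_singleton_self q₀
        simpa using this
      refine ⟨q₀.1, q₀.2, ?_⟩
      funext k
      by_cases hk : (k : ℕ) = (q₀ : ℕ)
      · rw [if_pos hk, show k = q₀ from Fin.ext hk]; exact hq₀mem.symm
      · rw [if_neg hk]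
        have hk1 : v k ≠ 1 := by
          intro hv
          have hmem : k ∈ Finset.univ.filter fun k => v k = 1 := by simpa using hv
          rw [hq₀, Finset.mem_singleton] at hmem
          exact hk (congrArg Fin.val hmem)
        have hlt := (v k).isLt
        have hne : ((v k : ℕ)) ≠ 1 := fun h' => hk1 (Fin.ext (by simpa using h'))
        exact (Fin.ext (by simp only [Fin.val_zero]; omega) : v k = 0).symm
    · rintro ⟨q, hq, rfl⟩
      have hset1 : (Finset.univ.filter fun k : Fin n =>
          (if (k:ℕ) = q then (1:Fin 2) else 0) = 1) = {(⟨q, hq⟩ : Fin n)} := by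
        ext k
        simp only [Finset.mem_filter, Finset.mem_univ, true_and, Finset.mem_singleton]
        constructor
        · intro hk
          by_cases h' : (k:ℕ) = q
          · exact Fin.ext h'
          · rw [if_neg h'] at hk; exact absurd hk (by decide)
        · rintro rfl; simp
      intro i
      fin_cases i
      · have hcompl := Finset.card_filter_add_card_filter_not
          (s := (Finset.univ : Finset (Fin n)))
          (p := fun k : Fin n => (if (k:ℕ) = q then (1:Fin 2) else 0) = 1)
        rw [hset1] at hcompl
        have heq : (Finset.univ.filter fun k : Fin n =>
              ¬((if (k:ℕ) = q then (1:Fin 2) else 0) = 1))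
            = Finset.univ.filter fun k : Fin n =>
              (if (k:ℕ) = q then (1:Fin 2) else 0) = 0 := by
          apply Finset.filter_congr
          intro k _
          by_cases h' : (k:ℕ) = q <;> simp [h']
        rw [heq] at hcompl
        simp only [Finset.card_singleton, Finset.card_univ, Fintype.card_fin] at hcompl
        simp only [show ((⟨0, by omega⟩ : Fin 2)) = 0 from rfl]
        rw [show (![n-1,1] 0 : ℕ) = n - 1 from rfl]
        omega
      · simp only [show ((⟨1, by omega⟩ : Fin 2)) = 1 from rfl]
        rw [show (![n-1,1] 1 : ℕ) = 1 from rfl, hset1]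
        simp
  rw [Lpart, himg, Finset.sum_image ?hinj]
  case hinj =>
    intro a ha b hb hfe
    have := congrFun hfe ⟨a, Finset.mem_range.mp ha⟩
    simp only [if_pos rfl] at this
    by_cases hab : (a : ℕ) = b
    · exact hab
    · rw [if_neg hab] at this; exact absurd this (by decide)
  apply Finset.sum_congr rfl
  intro q hq
  rw [List.map_ofFn]
  have hc : (![y,z] ∘ fun k : Fin n => if (k:ℕ) = q then (1:Fin 2) else 0)
      = fun k : Fin n => if (k:ℕ) = q then z else y := by
    funext k
    by_cases h' : (k:ℕ) = q <;> simp [h', Function.comp]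
  rw [hc, ofFn_ite1 n q (Finset.mem_range.mp hq)]

end aux

/-- Lemma 4.2(a): in a (non-unital) associative `F`-algebra in which all partial
linearizations `L_θ` of `xⁿ` with `|θ| = n`, `θ ∉ {(n), (1,n-1), (n-1,1)}`
vanish identically and `L_{1,n-1}(x,y) + L_{n-1,1}(x,y) = 0` for all `x, y`,
one has `x·L_{n-1,1}(y,z) = L_{n-1,1}(y, xz)`. -/
theorem stmt_13 {F A : Type*} [Field F] [NonUnitalRing A] [Module F A]
    [SMulCommClass F A A] [IsScalarTower F A A]
    (n : ℕ) (hn : 3 ≤ n)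
    (hL : ∀ (r : ℕ) (θ : Fin r → ℕ) (a : Fin r → A),
      (∀ i, 1 ≤ θ i) → (∑ i, θ i) = n →
      r ≠ 1 → ¬(r = 2 ∧ ∃ i, θ i = 1) → Lpart n θ a = 0)
    (hsym : ∀ x y : A, Lpart n ![1, n - 1] ![x, y] + Lpart n ![n - 1, 1] ![x, y] = 0) :
    ∀ x y z : A, x * Lpart n ![n - 1, 1] ![y, z] = Lpart n ![n - 1, 1] ![y, x * z] := by
  intro x y z
  have hn1 : 1 ≤ n := by omega
  have hn2 : 2 ≤ n := by omega
  have hz3 : ∀ a b : A, Lpart n ![1,1,n-2] ![a,b,y] = 0 := by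
    intro a b
    apply hL 3 ![1,1,n-2] ![a,b,y]
    · intro i
      fin_cases i <;> simp <;> omega
    · rw [Fin.sum_univ_three,
        show (![1,1,n-2] 0 : ℕ) = 1 from rfl,
        show (![1,1,n-2] 1 : ℕ) = 1 from rfl,
        show (![1,1,n-2] 2 : ℕ) = n-2 from rfl]
      omega
    · omega
    · rintro ⟨h32, -⟩; omega
  set D : Finset (ℕ×ℕ) :=
    (Finset.range n ×ˢ Finset.range n).filter (fun pq : ℕ×ℕ => pq.1 ≠ pq.2) with hDdef
  set Fw : ℕ × ℕ → A := fun pq => prodNE (wrd3 x z y (n+1) pq.1 pq.2) with hFdef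
  set B2 : Finset (ℕ×ℕ) := Finset.range (n+2) ×ˢ Finset.range (n+2) with hB2def
  set s1 : Finset (ℕ×ℕ) :=
    B2.filter (fun pq : ℕ×ℕ => pq.1 = 0 ∧ 1 ≤ pq.2 ∧ pq.2 ≤ n) with hs1def
  set s2 : Finset (ℕ×ℕ) :=
    B2.filter (fun pq : ℕ×ℕ => pq.2 = pq.1 + 1 ∧ pq.1 < n) with hs2def
  set s3 : Finset (ℕ×ℕ) :=
    B2.filter (fun pq : ℕ×ℕ =>
      1 ≤ pq.2 ∧ pq.2 ≤ n ∧ pq.1 ≤ n ∧ pq.1 + 1 ≠ pq.2 ∧ pq.1 ≠ pq.2) with hs3def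
  set s4 : Finset (ℕ×ℕ) :=
    B2.filter (fun pq : ℕ×ℕ =>
      1 ≤ pq.1 ∧ pq.1 ≤ n ∧ 1 ≤ pq.2 ∧ pq.2 ≤ n ∧ pq.1 ≠ pq.2) with hs4def
  have him1 : (Finset.range n).image (fun q => ((0:ℕ), q+1)) = s1 := by
    ext ⟨P, Q⟩
    simp only [hs1def, hB2def, Finset.mem_image, Finset.mem_range, Finset.mem_filter,
      Finset.mem_product, Prod.mk.injEq]
    constructor
    · rintro ⟨q, hq, h0, h1⟩
      omega
    · rintro ⟨⟨hP, hQ⟩, h0, h1, h2⟩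
      exact ⟨Q - 1, by omega, by omega, by omega⟩
  have him2 : (Finset.range n).image (fun q => (q, q+1)) = s2 := by
    ext ⟨P, Q⟩
    simp only [hs2def, hB2def, Finset.mem_image, Finset.mem_range, Finset.mem_filter,
      Finset.mem_product, Prod.mk.injEq]
    constructor
    · rintro ⟨q, hq, h0, h1⟩
      omega
    · rintro ⟨⟨hP, hQ⟩, h0, h1⟩
      exact ⟨P, by omega, by omega, by omega⟩
  have him3 : D.image
      (fun pq : ℕ×ℕ => (if pq.1 < pq.2 then pq.1 else pq.1 + 1, pq.2 + 1)) = s3 := by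
    ext ⟨P, Q⟩
    simp only [hs3def, hDdef, hB2def, Finset.mem_image, Finset.mem_range, Finset.mem_filter,
      Finset.mem_product, Prod.mk.injEq]
    constructor
    · rintro ⟨⟨p, q⟩, ⟨⟨hp, hq⟩, hne⟩, h0, h1⟩
      simp only at h0 h1 hne
      split_ifs at h0 <;> omega
    · rintro ⟨⟨hP, hQ⟩, h1, h2, h3, h4, h5⟩
      by_cases hc : P + 1 < Q
      · refine ⟨(P, Q - 1), ⟨⟨by omega, by omega⟩, by omega⟩, ?_, by omega⟩
        rw [if_pos (by omega : P < Q - 1)]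
      · refine ⟨(P - 1, Q - 1), ⟨⟨by omega, by omega⟩, by omega⟩, ?_, by omega⟩
        rw [if_neg (by omega : ¬ (P - 1 < Q - 1))]
        omega
  have him4 : D.image (fun pq : ℕ×ℕ => (pq.1 + 1, pq.2 + 1)) = s4 := by
    ext ⟨P, Q⟩
    simp only [hs4def, hDdef, hB2def, Finset.mem_image, Finset.mem_range, Finset.mem_filter,
      Finset.mem_product, Prod.mk.injEq]
    constructor
    · rintro ⟨⟨p, q⟩, ⟨⟨hp, hq⟩, hne⟩, h0, h1⟩
      simp only at h0 h1 hne
      omega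
    · rintro ⟨⟨hP, hQ⟩, h1, h2, h3, h4, h5⟩
      exact ⟨(P - 1, Q - 1), ⟨⟨by omega, by omega⟩, by omega⟩, by omega, by omega⟩
  have hinj1 : ∀ a ∈ Finset.range n, ∀ b ∈ Finset.range n,
      ((0:ℕ), a+1) = ((0:ℕ), b+1) → a = b := by
    intro a _ b _ h
    simpa using h
  have hinj2 : ∀ a ∈ Finset.range n, ∀ b ∈ Finset.range n,
      (a, a+1) = (b, b+1) → a = b := by
    intro a _ b _ h
    simpa using (congrArg Prod.fst h)
  have hinj4 : ∀ a ∈ D, ∀ b ∈ D, (a.1 + 1, a.2 + 1) = (b.1 + 1, b.2 + 1) → a = b := by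
    rintro ⟨p, q⟩ _ ⟨p', q'⟩ _ h
    simp only [Prod.mk.injEq] at h ⊢
    omega
  have hinj3 : ∀ a ∈ D, ∀ b ∈ D,
      ((if a.1 < a.2 then a.1 else a.1 + 1, a.2 + 1) : ℕ×ℕ)
        = (if b.1 < b.2 then b.1 else b.1 + 1, b.2 + 1) → a = b := by
    rintro ⟨p, q⟩ ha ⟨p', q'⟩ hb h
    simp only [hDdef, Finset.mem_filter, Finset.mem_product, Finset.mem_range] at ha hb
    simp only [Prod.mk.injEq] at h ⊢
    obtain ⟨h1, h2⟩ := h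
    split_ifs at h1 <;> omega
  -- expression A
  have hA : x * Lpart n ![n-1,1] ![y,z] = ∑ pq ∈ s1, Fw pq := by
    rw [Lpart_two hn1 y z, Finset.mul_sum, ← him1, Finset.sum_image hinj1]
    refine Finset.sum_congr rfl fun q hq => ?_
    have hq' := Finset.mem_range.mp hq
    rw [mul_prodNE _ _ (by simp)]
    show _ = prodNE (wrd3 x z y (n+1) 0 (q+1))
    rw [wrd3, if_pos (by omega : 0 < q + 1)]
    rw [show q+1-0-1 = q from by omega, show n+1-1-(q+1) = n-1-q from by omega]
    simp
  have hB : Lpart n ![n-1,1] ![y, x*z] = ∑ pq ∈ s2, Fw pq := by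
    rw [Lpart_two hn1 y (x*z), ← him2, Finset.sum_image hinj2]
    refine Finset.sum_congr rfl fun q hq => ?_
    have hq' := Finset.mem_range.mp hq
    rw [prodNE_merge]
    show _ = prodNE (wrd3 x z y (n+1) q (q+1))
    rw [wrd3, if_pos (by omega : q < q + 1)]
    rw [show q+1-q-1 = 0 from by omega, show n+1-1-(q+1) = n-1-q from by omega]
    simp
  have hC : ∑ pq ∈ s3, Fw pq = 0 := by
    have hs : Lpart n ![1,1,n-2] ![x, y*z, y] = ∑ pq ∈ s3, Fw pq := by
      rw [Lpart_three hn2, ← him3, Finset.sum_image hinj3]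
      refine Finset.sum_congr rfl ?_
      rintro ⟨p, q⟩ hpq
      simp only [hDdef, Finset.mem_filter, Finset.mem_product, Finset.mem_range] at hpq
      obtain ⟨⟨hp, hq⟩, hne⟩ := hpq
      simp only [hFdef]
      by_cases hlt : p < q
      · rw [wrd3, if_pos hlt,
          show List.replicate p y ++ x ::
              (List.replicate (q-p-1) y ++ (y*z) :: List.replicate (n-1-q) y)
            = (List.replicate p y ++ x :: List.replicate (q-p-1) y)
                ++ (y*z) :: List.replicate (n-1-q) y from by simp,
          prodNE_merge]
        rw [if_pos hlt]
        show _ = prodNE (wrd3 x z y (n+1) p (q+1))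
        rw [wrd3, if_pos (by omega : p < q + 1)]
        congr 1
        rw [show q+1-p-1 = (q-p-1)+1 from by omega,
          show n+1-1-(q+1) = n-1-q from by omega, ← rep_cons]
        simp
      · rw [wrd3, if_neg hlt, prodNE_merge]
        rw [if_neg hlt]
        show _ = prodNE (wrd3 x z y (n+1) (p+1) (q+1))
        rw [wrd3, if_neg (by omega : ¬ (p + 1 < q + 1))]
        congr 1
        rw [show p+1-(q+1)-1 = p-q-1 from by omega,
          show n+1-1-(p+1) = n-1-p from by omega, ← rep_cons]
    rw [← hs]
    exact hz3 x (y*z)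
  have hD0 : ∑ pq ∈ s4, Fw pq = 0 := by
    have hs : y * Lpart n ![1,1,n-2] ![x, z, y] = ∑ pq ∈ s4, Fw pq := by
      rw [Lpart_three hn2, Finset.mul_sum, ← him4, Finset.sum_image hinj4]
      refine Finset.sum_congr rfl ?_
      rintro ⟨p, q⟩ hpq
      simp only [hDdef, Finset.mem_filter, Finset.mem_product, Finset.mem_range] at hpq
      obtain ⟨⟨hp, hq⟩, hne⟩ := hpq
      simp only [hFdef]
      rw [mul_prodNE _ _ (wrd3_ne_nil _ _ _ _ _ _)]
      congr 1
      show _ = wrd3 x z y (n+1) (p+1) (q+1)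
      by_cases hlt : p < q
      · rw [wrd3, if_pos hlt, wrd3, if_pos (by omega : p + 1 < q + 1)]
        rw [show q+1-(p+1)-1 = q-p-1 from by omega,
          show n+1-1-(q+1) = n-1-q from by omega, List.replicate_succ]
        simp
      · rw [wrd3, if_neg hlt, wrd3, if_neg (by omega : ¬ (p + 1 < q + 1))]
        rw [show p+1-(q+1)-1 = p-q-1 from by omega,
          show n+1-1-(p+1) = n-1-p from by omega, List.replicate_succ]
        simp
    rw [← hs, hz3 x z, mul_zero]
  have hdisj14 : Disjoint s1 s4 := by
    rw [Finset.disjoint_left]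
    intro pq h1 h4
    simp only [hs1def, hs4def, Finset.mem_filter] at h1 h4
    omega
  have hdisj23 : Disjoint s2 s3 := by
    rw [Finset.disjoint_left]
    intro pq h2 h3
    simp only [hs2def, hs3def, Finset.mem_filter] at h2 h3
    omega
  have hunion : s1 ∪ s4 = s2 ∪ s3 := by
    rw [hs1def, hs2def, hs3def, hs4def, ← Finset.filter_or, ← Finset.filter_or]
    exact Finset.filter_congr (fun pq _ => by omega)
  have hkey : ∑ pq ∈ s1, Fw pq + ∑ pq ∈ s4, Fw pq
      = ∑ pq ∈ s2, Fw pq + ∑ pq ∈ s3, Fw pq := by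
    rw [← Finset.sum_union hdisj14, ← Finset.sum_union hdisj23, hunion]
  rw [hA, hB]
  rw [hC, hD0, add_zero, add_zero] at hkey
  exact hkey
end

section
/- Let n ≥ 3 and F a field, and let A be an associative F-algebra satisfying: L_θ = 0 identically for all multidegrees θ with |θ| = n and θ ∉ {(n),(1,n-1),(n-1,1)}, and L_{1,n-1}(x,y) + L_{n-1,1}(x,y) = 0 for all x,y. Then for all x, y, z ∈ A: L_{n-1,1}(x, yz) = - L_{n-1,1}(z, yx), where L_{n-1,1}(a,b) = ∑_{i=0}^{n-1} aⁱ b a^{n-1-i}. -/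
section unital

variable {R : Type*} [Ring R]

/-- Unital analogue of `Lpart`. -/
def LP (n : ℕ) {r : ℕ} (θ : Fin r → ℕ) (a : Fin r → R) : R :=
  ∑ v ∈ Finset.univ.filter (fun v : Fin n → Fin r =>
      ∀ i, (Finset.univ.filter fun k => v k = i).card = θ i),
    ((List.ofFn v).map a).prod

lemma LP_eq_zero {m r : ℕ} (θ : Fin r → ℕ) (a : Fin r → R) (h : ∑ i, θ i ≠ m) :
    LP m θ a = 0 := by
  rw [LP, Finset.sum_eq_zero]
  intro v hv
  rw [Finset.mem_filter] at hv
  exfalso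
  apply h
  have := Finset.card_eq_sum_card_fiberwise
    (f := v) (s := (Finset.univ : Finset (Fin m))) (t := (Finset.univ : Finset (Fin r)))
    (fun x _ => Finset.mem_univ _)
  simp only [Finset.card_univ, Fintype.card_fin] at this
  rw [this]
  exact Finset.sum_congr rfl fun i _ => (hv.2 i).symm

lemma count_succ {m r : ℕ} (w : Fin (m+1) → Fin r) (i : Fin r) :
    (Finset.univ.filter fun k => w k = i).card
      = (if w 0 = i then 1 else 0) + (Finset.univ.filter fun k : Fin m => w k.succ = i).card := by
  rw [Finset.card_filter, Finset.card_filter, Fin.sum_univ_succ]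

lemma LP_peel {m r : ℕ} (θ : Fin r → ℕ) (a : Fin r → R) (hθ : ∑ i, θ i = m + 1) :
    LP (m+1) θ a = ∑ j : Fin r, a j *
      LP m (fun i => if i = j then θ j - 1 else θ i) a := by
  rw [LP, ← Finset.sum_fiberwise_of_maps_to
    (g := fun v : Fin (m+1) → Fin r => v 0) (t := Finset.univ) (fun v _ => Finset.mem_univ _)]
  refine Finset.sum_congr rfl fun j _ => ?_
  rcases Nat.eq_zero_or_pos (θ j) with h0 | hpos
  · -- both sides are zero
    have hL : (Finset.univ.filter (fun v : Fin (m+1) → Fin r =>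
        ∀ i, (Finset.univ.filter fun k => v k = i).card = θ i)).filter (fun v => v 0 = j)
        = ∅ := by
      rw [Finset.eq_empty_iff_forall_notMem]
      intro v hv
      rw [Finset.mem_filter, Finset.mem_filter] at hv
      have hc := hv.1.2 j
      rw [h0, Finset.card_eq_zero, Finset.eq_empty_iff_forall_notMem] at hc
      exact hc 0 (by simp [hv.2])
    rw [hL, Finset.sum_empty, LP_eq_zero _ _ ?_, mul_zero]
    intro hc
    have he : (∑ i, if i = j then θ j - 1 else θ i) = ∑ i, θ i := by
      refine Finset.sum_congr rfl fun i _ => ?_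
      by_cases hij : i = j
      · rw [if_pos hij, hij, h0]
      · rw [if_neg hij]
    rw [show (fun i => if i = j then θ j - 1 else θ i) = fun i => if i = j then θ j - 1 else θ i from rfl] at hc
    omega
  · -- bijection
    rw [LP, Finset.mul_sum]
    refine Finset.sum_nbij' (fun v k => v (Fin.succ k)) (fun u => Fin.cons j u)
      ?_ ?_ ?_ ?_ ?_
    · intro v hv
      rw [Finset.mem_filter, Finset.mem_filter] at hv
      rw [Finset.mem_filter]
      refine ⟨Finset.mem_univ _, fun i => ?_⟩
      beta_reduce
      have hc := hv.1.2 i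
      rw [count_succ, hv.2] at hc
      by_cases hij : i = j
      · subst hij
        rw [if_pos rfl]
        rw [if_pos rfl] at hc
        omega
      · rw [if_neg hij]
        rw [if_neg (fun h => hij h.symm)] at hc
        omega
    · intro u hu
      rw [Finset.mem_filter] at hu
      rw [Finset.mem_filter, Finset.mem_filter]
      refine ⟨⟨Finset.mem_univ _, fun i => ?_⟩, by simp⟩
      rw [count_succ]
      simp only [Fin.cons_zero, Fin.cons_succ]
      have hu2 := hu.2 i
      beta_reduce at hu2
      rw [hu2]
      by_cases hij : i = j
      · subst hij
        rw [if_pos rfl, if_pos rfl]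
        omega
      · rw [if_neg hij, if_neg (fun h => hij h.symm)]
        omega
    · intro v hv
      rw [Finset.mem_filter] at hv
      conv_lhs => rw [← hv.2]
      exact Fin.cons_self_tail v
    · intro u _
      funext k
      simp
    · intro v hv
      rw [Finset.mem_filter] at hv
      rw [List.ofFn_succ, List.map_cons, List.prod_cons, hv.2]


lemma LP_zero_deg {r : ℕ} (θ : Fin r → ℕ) (a : Fin r → R) (h : ∀ i, θ i = 0) :
    LP 0 θ a = 1 := by
  rw [LP]
  have he : (Finset.univ.filter (fun v : Fin 0 → Fin r =>
      ∀ i, (Finset.univ.filter fun k => v k = i).card = θ i)) = Finset.univ := by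
    apply Finset.filter_true_of_mem
    intro v _ i
    simp [h i]
  rw [he]
  rw [Finset.sum_congr rfl (fun v _ => by simp : ∀ v ∈ (Finset.univ : Finset (Fin 0 → Fin r)),
    ((List.ofFn v).map a).prod = 1)]
  simp [Finset.card_univ]

lemma LP2_zero {m : ℕ} (p q : ℕ) (u w : R) (h : p + q ≠ m) : LP m ![p, q] ![u, w] = 0 :=
  LP_eq_zero _ _ (by rw [Fin.sum_univ_two]; simpa using h)

lemma LP3_zero {m : ℕ} (p q s : ℕ) (u w t : R) (h : p + q + s ≠ m) :
    LP m ![p, q, s] ![u, w, t] = 0 :=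
  LP_eq_zero _ _ (by rw [Fin.sum_univ_three]; simpa using h)

lemma LP_peel2 {m : ℕ} (p q : ℕ) (u w : R) (h : p + q = m + 1) :
    LP (m+1) ![p, q] ![u, w]
      = u * LP m ![p - 1, q] ![u, w] + w * LP m ![p, q - 1] ![u, w] := by
  rw [LP_peel _ _ (by rw [Fin.sum_univ_two]; simpa using h), Fin.sum_univ_two]
  have h0 : (fun i : Fin 2 => if i = 0 then ![p, q] 0 - 1 else ![p, q] i) = ![p - 1, q] := by
    funext i; fin_cases i <;> simp
  have h1 : (fun i : Fin 2 => if i = 1 then ![p, q] 1 - 1 else ![p, q] i) = ![p, q - 1] := by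
    funext i; fin_cases i <;> simp
  rw [h0, h1]
  simp

lemma LP_peel3 {m : ℕ} (p q s : ℕ) (u w t : R) (h : p + q + s = m + 1) :
    LP (m+1) ![p, q, s] ![u, w, t]
      = u * LP m ![p - 1, q, s] ![u, w, t] + w * LP m ![p, q - 1, s] ![u, w, t]
        + t * LP m ![p, q, s - 1] ![u, w, t] := by
  rw [LP_peel _ _ (by rw [Fin.sum_univ_three]; simpa using h), Fin.sum_univ_three]
  have h0 : (fun i : Fin 3 => if i = 0 then ![p,q,s] 0 - 1 else ![p,q,s] i) = ![p-1, q, s] := by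
    funext i; fin_cases i <;> simp
  have h1 : (fun i : Fin 3 => if i = 1 then ![p,q,s] 1 - 1 else ![p,q,s] i) = ![p, q-1, s] := by
    funext i; fin_cases i <;> simp
  have h2 : (fun i : Fin 3 => if i = 2 then ![p,q,s] 2 - 1 else ![p,q,s] i) = ![p, q, s-1] := by
    funext i; fin_cases i <;> simp
  rw [h0, h1, h2]
  simp

-- powers
lemma LP_pow2 (c : R) : ∀ m (x : R), LP m ![m, 0] ![c, x] = c ^ m := by
  intro m
  induction m with
  | zero => intro x; rw [LP_zero_deg _ _ (by intro i; fin_cases i <;> simp), pow_zero]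
  | succ m ih =>
    intro x
    rw [LP_peel2 _ _ _ _ (by omega)]
    simp only [Nat.add_sub_cancel]
    rw [ih, LP2_zero _ _ _ _ (by omega), mul_zero, add_zero, pow_succ']

lemma LP_pow2' (c : R) : ∀ m (x : R), LP m ![0, m] ![x, c] = c ^ m := by
  intro m
  induction m with
  | zero => intro x; rw [LP_zero_deg _ _ (by intro i; fin_cases i <;> simp), pow_zero]
  | succ m ih =>
    intro x
    rw [LP_peel2 _ _ _ _ (by omega)]
    simp only [Nat.add_sub_cancel]
    rw [ih, LP2_zero _ _ _ _ (by omega), mul_zero, zero_add, pow_succ']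

lemma LP_pow3 (c : R) : ∀ m (x y : R), LP m ![m, 0, 0] ![c, x, y] = c ^ m := by
  intro m
  induction m with
  | zero => intro x y; rw [LP_zero_deg _ _ (by intro i; fin_cases i <;> simp), pow_zero]
  | succ m ih =>
    intro x y
    rw [LP_peel3 _ _ _ _ _ _ (by omega)]
    simp only [Nat.add_sub_cancel, Nat.zero_sub]
    rw [ih, LP3_zero (m:=m) (m+1) 0 0 c x y (by omega)]
    rw [mul_zero, mul_zero, add_zero, add_zero, pow_succ']

-- S_m(c,b) = LP (m+1) ![m,1] ![c,b]
lemma Sq_zero (c b : R) : LP 1 ![0, 1] ![c, b] = b := by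
  have h := LP_peel2 (m:=0) 0 1 c b (by omega)
  simp only [Nat.zero_sub, Nat.sub_self, Nat.add_sub_cancel] at h
  rw [LP2_zero (m:=0) 0 1 c b (by omega),
    LP_zero_deg _ _ (by intro i; fin_cases i <;> simp)] at h
  simpa using h

lemma Sq_succ (m : ℕ) (c b : R) :
    LP (m+2) ![m+1, 1] ![c, b] = c * LP (m+1) ![m, 1] ![c, b] + b * c^(m+1) := by
  rw [show m+2 = (m+1)+1 from rfl, LP_peel2 _ _ _ _ (by omega)]
  simp only [Nat.add_sub_cancel]
  rw [LP_pow2]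

lemma SXX_placeholder : True := trivial

lemma G3a (c : R) : ∀ m (x b : R),
    LP (m+1) ![m, 0, 1] ![c, x, b] = LP (m+1) ![m, 1] ![c, b] := by
  intro m
  induction m with
  | zero =>
    intro x b
    have h0 : LP (0+1) ![(0:ℕ), 1] ![c, b] = b := Sq_zero c b
    rw [LP_peel3 0 0 1 c x b (by omega), h0]
    simp only [Nat.zero_sub, Nat.add_sub_cancel]
    rw [LP3_zero (m:=0) 0 0 1 c x b (by omega), LP_zero_deg _ _ (by intro i; fin_cases i <;> simp)]
    simp
  | succ m ih =>
    intro x b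
    rw [show m+1+1 = (m+1)+1 from rfl, LP_peel3 _ _ _ _ _ _ (by omega)]
    simp only [Nat.zero_sub, Nat.add_sub_cancel]
    rw [ih, LP3_zero (m:=m+1) (m+1) 0 1 c x b (by omega), LP_pow3, Sq_succ]
    ring_nf
    simp

lemma G3b (c : R) : ∀ m (b x : R),
    LP (m+1) ![m, 1, 0] ![c, b, x] = LP (m+1) ![m, 1] ![c, b] := by
  intro m
  induction m with
  | zero =>
    intro b x
    have h0 : LP (0+1) ![(0:ℕ), 1] ![c, b] = b := Sq_zero c b
    rw [LP_peel3 0 1 0 c b x (by omega), h0]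
    simp only [Nat.zero_sub, Nat.add_sub_cancel]
    rw [LP3_zero (m:=0) 0 1 0 c b x (by omega), LP_zero_deg _ _ (by intro i; fin_cases i <;> simp)]
    simp
  | succ m ih =>
    intro b x
    rw [show m+1+1 = (m+1)+1 from rfl, LP_peel3 _ _ _ _ _ _ (by omega)]
    simp only [Nat.zero_sub, Nat.add_sub_cancel]
    rw [ih, LP3_zero (m:=m+1) (m+1) 1 0 c b x (by omega), LP_pow3, Sq_succ]
    ring_nf
    simp

lemma Sswap (c b : R) : ∀ m, LP (m+1) ![1, m] ![b, c] = LP (m+1) ![m, 1] ![c, b] := by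
  intro m
  induction m with
  | zero =>
    rw [Sq_zero]
    have h := LP_peel2 (m:=0) 1 0 b c (by omega)
    simp only [Nat.zero_sub, Nat.sub_self, Nat.add_sub_cancel] at h
    rw [LP2_zero (m:=0) 1 0 b c (by omega),
      LP_zero_deg _ _ (by intro i; fin_cases i <;> simp)] at h
    simpa using h
  | succ m ih =>
    rw [LP_peel2 1 (m+1) b c (by omega), Sq_succ]
    simp only [Nat.sub_self, Nat.add_sub_cancel]
    rw [ih, LP_pow2']
    noncomm_ring

lemma Sq_cb (c b : R) : ∀ m, LP (m+1) ![m, 1] ![c, c * b] = c * LP (m+1) ![m, 1] ![c, b] := by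
  intro m
  induction m with
  | zero => rw [Sq_zero, Sq_zero]
  | succ m ih =>
    rw [Sq_succ, Sq_succ, ih]
    noncomm_ring

lemma Dq_zero (c a b : R) : LP 2 ![0, 1, 1] ![c, a, b] = a * b + b * a := by
  have h := LP_peel3 (m:=1) 0 1 1 c a b (by omega)
  simp only [Nat.zero_sub, Nat.sub_self, Nat.add_sub_cancel] at h
  have e1 : LP (0+1) ![(0:ℕ), 0, 1] ![c, a, b] = LP (0+1) ![(0:ℕ), 1] ![c, b] := G3a c 0 a b
  have e2 : LP (0+1) ![(0:ℕ), 1, 0] ![c, a, b] = LP (0+1) ![(0:ℕ), 1] ![c, a] := G3b c 0 a b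
  have e3 : LP (0+1) ![(0:ℕ), 1] ![c, b] = b := Sq_zero c b
  have e4 : LP (0+1) ![(0:ℕ), 1] ![c, a] = a := Sq_zero c a
  rw [LP3_zero (m:=1) 0 1 1 c a b (by omega), e1, e2, e3, e4] at h
  simpa using h

lemma Dq_succ (m : ℕ) (c a b : R) :
    LP (m+3) ![m+1, 1, 1] ![c, a, b]
      = c * LP (m+2) ![m, 1, 1] ![c, a, b]
        + a * LP (m+2) ![m+1, 1] ![c, b] + b * LP (m+2) ![m+1, 1] ![c, a] := by
  have h := LP_peel3 (m:=m+2) (m+1) 1 1 c a b (by omega)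
  simp only [Nat.zero_sub, Nat.sub_self, Nat.add_sub_cancel] at h
  rw [G3a c (m+1) a b, G3b c (m+1) a b] at h
  exact h

/-- The key ring identity:
`L_{M+1,1}(c, ab) = c·L_{M,1,1}(c,a,b) + a·L_{M+1,1}(c,b) − L_{M,1,1}(c, cb, a)`. -/
lemma Key (c a b : R) : ∀ m : ℕ,
    LP (m+2) ![m+1, 1] ![c, a * b]
      = c * LP (m+2) ![m, 1, 1] ![c, a, b]
        + a * LP (m+2) ![m+1, 1] ![c, b]
        - LP (m+2) ![m, 1, 1] ![c, c * b, a] := by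
  intro m
  induction m with
  | zero =>
    rw [Sq_succ 0 c (a*b), Sq_succ 0 c b, Dq_zero, Dq_zero, Sq_zero, Sq_zero]
    noncomm_ring
  | succ m ih =>
    rw [Sq_succ (m+1) c (a*b), Sq_succ (m+1) c b, Dq_succ m c a b, Dq_succ m c (c*b) a,
      Sq_cb c b (m+1), ih]
    noncomm_ring

end unital

section transfer

variable {F A : Type*} [Field F] [NonUnitalRing A] [Module F A]
  [SMulCommClass F A A] [IsScalarTower F A A]

lemma inr_foldl (xs : List A) (x : A) :
    (↑(xs.foldl (· * ·) x) : Unitization F A) = ↑x * (xs.map (↑· : A → Unitization F A)).prod := by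
  induction xs generalizing x with
  | nil => simp
  | cons y ys ih =>
    rw [List.foldl_cons, ih, List.map_cons, List.prod_cons, Unitization.inr_mul, mul_assoc]

lemma inr_prodNE (l : List A) (h : l ≠ []) :
    (↑(prodNE l) : Unitization F A) = (l.map (↑· : A → Unitization F A)).prod := by
  match l with
  | [] => exact absurd rfl h
  | x :: xs => rw [show prodNE (x :: xs) = xs.foldl (· * ·) x from rfl, inr_foldl,
      List.map_cons, List.prod_cons]

lemma inr_Lpart (n : ℕ) (hn : n ≠ 0) {r : ℕ} (θ : Fin r → ℕ) (a : Fin r → A) :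
    (↑(Lpart n θ a) : Unitization F A) = LP n θ (fun i => ↑(a i)) := by
  rw [Lpart, LP]
  rw [show ((↑(∑ v ∈ Finset.univ.filter (fun v : Fin n → Fin r =>
        ∀ i, (Finset.univ.filter fun k => v k = i).card = θ i),
      prodNE ((List.ofFn v).map a)) : Unitization F A))
    = (Unitization.inrNonUnitalAlgHom F A) (∑ v ∈ Finset.univ.filter (fun v : Fin n → Fin r =>
        ∀ i, (Finset.univ.filter fun k => v k = i).card = θ i),
      prodNE ((List.ofFn v).map a)) from rfl, map_sum]
  refine Finset.sum_congr rfl fun v _ => ?_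
  show (↑(prodNE ((List.ofFn v).map a)) : Unitization F A) = _
  rw [inr_prodNE _ (by
    intro hc
    apply hn
    have := congrArg List.length hc
    simpa using this)]
  rw [List.map_map, List.map_ofFn, List.map_ofFn]
  rfl

end transfer

variable {F A : Type*} [Field F] [NonUnitalRing A] [Module F A]
  [SMulCommClass F A A] [IsScalarTower F A A] in
lemma coe2 (u w : A) :
    (fun i => (↑((![u, w] : Fin 2 → A) i) : Unitization F A)) = ![(↑u : Unitization F A), ↑w] := by
  funext i; fin_cases i <;> simp

variable {F A : Type*} [Field F] [NonUnitalRing A] [Module F A]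
  [SMulCommClass F A A] [IsScalarTower F A A] in
lemma coe3 (u w t : A) :
    (fun i => (↑((![u, w, t] : Fin 3 → A) i) : Unitization F A))
      = ![(↑u : Unitization F A), ↑w, ↑t] := by
  funext i; fin_cases i <;> simp

lemma KeyA (F : Type*) {A : Type*} [Field F] [NonUnitalRing A] [Module F A]
    [SMulCommClass F A A] [IsScalarTower F A A] (m : ℕ) (c a b : A) :
    Lpart (m+3) ![m+2, 1] ![c, a * b]
      = c * Lpart (m+3) ![m+1, 1, 1] ![c, a, b]
        + a * Lpart (m+3) ![m+2, 1] ![c, b]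
        - Lpart (m+3) ![m+1, 1, 1] ![c, c * b, a] := by
  apply Unitization.inr_injective (R := F)
  rw [sub_eq_add_neg, Unitization.inr_add, Unitization.inr_add, Unitization.inr_neg,
    Unitization.inr_mul, Unitization.inr_mul]
  rw [inr_Lpart _ (by omega), inr_Lpart _ (by omega), inr_Lpart _ (by omega),
    inr_Lpart _ (by omega)]
  rw [coe2 (F := F) c (a*b), coe3 (F := F) c a b, coe2 (F := F) c b,
    coe3 (F := F) c (c*b) a]
  have hab : (↑(a * b) : Unitization F A) = ↑a * ↑b := Unitization.inr_mul F a b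
  have hcb : (↑(c * b) : Unitization F A) = ↑c * ↑b := Unitization.inr_mul F c b
  rw [hab, hcb]
  have := Key (↑c : Unitization F A) ↑a ↑b (m+1)
  rw [← sub_eq_add_neg]
  exact this

lemma SswapA (F : Type*) {A : Type*} [Field F] [NonUnitalRing A] [Module F A]
    [SMulCommClass F A A] [IsScalarTower F A A] (m : ℕ) (c b : A) :
    Lpart (m+1) ![1, m] ![b, c] = Lpart (m+1) ![m, 1] ![c, b] := by
  apply Unitization.inr_injective (R := F)
  rw [inr_Lpart _ (by omega), inr_Lpart _ (by omega), coe2 (F := F) b c, coe2 (F := F) c b]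
  exact Sswap _ _ m


/-- Lemma 4.2(c): in a (non-unital) associative `F`-algebra in which all partial
linearizations `L_θ` of `xⁿ` with `|θ| = n`, `θ ∉ {(n), (1,n-1), (n-1,1)}`
vanish identically and `L_{1,n-1}(x,y) + L_{n-1,1}(x,y) = 0` for all `x, y`,
one has `L_{n-1,1}(x, yz) = -L_{n-1,1}(z, yx)`. -/
theorem stmt_14 {F A : Type*} [Field F] [NonUnitalRing A] [Module F A]
    [SMulCommClass F A A] [IsScalarTower F A A]
    (n : ℕ) (hn : 3 ≤ n)
    (hL : ∀ (r : ℕ) (θ : Fin r → ℕ) (a : Fin r → A),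
      (∀ i, 1 ≤ θ i) → (∑ i, θ i) = n →
      r ≠ 1 → ¬(r = 2 ∧ ∃ i, θ i = 1) → Lpart n θ a = 0)
    (hsym : ∀ x y : A, Lpart n ![1, n - 1] ![x, y] + Lpart n ![n - 1, 1] ![x, y] = 0) :
    ∀ x y z : A, Lpart n ![n - 1, 1] ![x, y * z] = -Lpart n ![n - 1, 1] ![z, y * x] := by
  obtain ⟨m, rfl⟩ : ∃ m, n = m + 3 := ⟨n - 3, by omega⟩
  intro x y z
  have hsub : m + 3 - 1 = m + 2 := rfl
  rw [hsub] at hsym ⊢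
  have h1 : Lpart (m+3) ![m+1, 1, 1] ![x, y, z] = 0 :=
    hL 3 _ _ (by intro i; fin_cases i <;> simp)
      (by simp [Fin.sum_univ_three]) (by omega) (by simp)
  have h2 : Lpart (m+3) ![m+1, 1, 1] ![x, x * z, y] = 0 :=
    hL 3 _ _ (by intro i; fin_cases i <;> simp)
      (by simp [Fin.sum_univ_three]) (by omega) (by simp)
  have h3 : Lpart (m+3) ![m+1, 1, 1] ![z, y, x] = 0 :=
    hL 3 _ _ (by intro i; fin_cases i <;> simp)
      (by simp [Fin.sum_univ_three]) (by omega) (by simp)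
  have h4 : Lpart (m+3) ![m+1, 1, 1] ![z, z * x, y] = 0 :=
    hL 3 _ _ (by intro i; fin_cases i <;> simp)
      (by simp [Fin.sum_univ_three]) (by omega) (by simp)
  rw [KeyA F m x y z, KeyA F m z y x, h1, h2, h3, h4]
  have h6 : Lpart (m+3) ![1, m+2] ![z, x] = Lpart (m+3) ![m+2, 1] ![x, z] :=
    SswapA F (m+2) x z
  have h5 := hsym z x
  rw [h6] at h5
  have h7 : Lpart (m+3) ![m+2, 1] ![x, z] = -Lpart (m+3) ![m+2, 1] ![z, x] :=
    eq_neg_of_add_eq_zero_left h5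
  rw [h7]
  noncomm_ring
end
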